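/- arXiv:2308.16859 — 5 statements merged into one kernel-verified Lean document; each statement's English description precedes it below -/
import Mathlib

section
/- Let A ⊆ V be an ancestral set. Then the principal submatrix Φ_{AA} satisfies Φ_{AA} = σ (I_A − H_{AA})^{-1} ((I_A − H_{AA})^{-1})^*, or equivalently (Φ_{AA})^{-1} = (1/σ)(I_A − H_{AA})^* (I_A − H_{AA}), where H_{AA} denotes the submatrix of H with rows and columns indexed by A and I_A the identity on A. -/
/-!
Ancestrality of `A` means that the rows of `I - H` indexed by `A` vanish outside `A`, i.e. `I - H`
is block triangular for the partition `A ∪ Aᶜ`. Hence so is `B = (I - H)⁻¹`, its `A`-block is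
`(I_A - H_AA)⁻¹`, and since the rows of `B` indexed by `A` vanish outside `A`,
`Φ_AA = σ (B B^*)_AA = σ B_AA (B_AA)^*`. Invertibility comes from acyclicity: `H` is strictly
triangular for the rank function of the well-founded relation `E`, so
`det (I - H) = det (I_A - H_AA) = 1`.
-/

open Matrix
open scoped Classical

noncomputable section

/-- `parents E i`: vertices `j` with a directed edge `j → i`, i.e. `(j,i) ∈ E`. -/
def parents {p : ℕ} (E : Fin p → Fin p → Prop) (i : Fin p) : Set (Fin p) := {j | E j i}

/-- Acyclicity: there is no (nonempty) directed cycle. -/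
def Acyclic {p : ℕ} (E : Fin p → Fin p → Prop) : Prop :=
  ∀ i : Fin p, ¬ Relation.TransGen E i i

/-- A set `C` is ancestral if it contains the parents of each of its members. -/
def Ancestral {p : ℕ} (E : Fin p → Fin p → Prop) (C : Finset (Fin p)) : Prop :=
  ∀ c ∈ C, ∀ j : Fin p, E j c → j ∈ C

/-- Nondescendants of `i`: all vertices other than `i` not reachable from `i`
by a nonempty directed path. -/
def nondesc {p : ℕ} (E : Fin p → Fin p → Prop) (i : Fin p) : Set (Fin p) :=
  {j | j ≠ i ∧ ¬ Relation.TransGen E i j}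

/-- `Phi σ H = σ (I - H)⁻¹ ((I - H)⁻¹)^*`. -/
def Phi {p : ℕ} (σ : ℝ) (H : Matrix (Fin p) (Fin p) ℂ) : Matrix (Fin p) (Fin p) ℂ :=
  (σ : ℂ) • ((1 - H)⁻¹ * ((1 - H)⁻¹)ᴴ)

/-- Submatrix of `Φ` with rows indexed by `S` and columns by `T`. -/
def subm {p : ℕ} (Φ : Matrix (Fin p) (Fin p) ℂ) (S T : Finset (Fin p)) :
    Matrix S T ℂ := Matrix.of fun s t => Φ s.1 t.1

/-- The conditional PSD `f(i,C) = Φ_{ii} - Φ_{iC} Φ_{CC}⁻¹ Φ_{Ci}` (a real scalar). -/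
def condPSD {p : ℕ} (σ : ℝ) (H : Matrix (Fin p) (Fin p) ℂ)
    (i : Fin p) (C : Finset (Fin p)) : ℝ :=
  (Phi σ H i i -
    dotProduct (fun c : C => Phi σ H i c.1)
      (Matrix.mulVec (subm (Phi σ H) C C)⁻¹ (fun c : C => Phi σ H c.1 i))).re

theorem Acyclic.wellFounded {p : ℕ} {E : Fin p → Fin p → Prop} (h : Acyclic E) :
    WellFounded E :=
  have : Std.Irrefl (Relation.TransGen E) := ⟨h⟩
  Subrelation.wf Relation.TransGen.single
    (Finite.wellFounded_of_trans_of_irrefl (Relation.TransGen E))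

theorem Prop.lt_iff_not_and {P Q : Prop} : P < Q ↔ ¬P ∧ Q := by
  change (P → Q) ∧ ¬(Q → P) ↔ _
  tauto

-- With `False < True`, `H.BlockTriangular (· ∈ A)` says that `H i j = 0` for `i ∈ A`, `j ∉ A`.
theorem Ancestral.blockTriangular {p : ℕ} {E : Fin p → Fin p → Prop} {A : Finset (Fin p)}
    (hA : Ancestral E A) {R : Type*} [Zero R] {H : Matrix (Fin p) (Fin p) R}
    (hH : ∀ a b, H a b ≠ 0 → E b a) :
    H.BlockTriangular (· ∈ A) := by
  intro i j hij
  obtain ⟨hj, hi⟩ := Prop.lt_iff_not_and.1 hij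
  by_contra hne
  exact hj (hA i hi j (hH i j hne))

theorem subm_eq_submatrix {p : ℕ} (M : Matrix (Fin p) (Fin p) ℂ) (S T : Finset (Fin p)) :
    subm M S T = M.submatrix (Subtype.val : S → Fin p) (Subtype.val : T → Fin p) :=
  rfl

namespace Matrix

variable {n R : Type*} [Fintype n] [CommRing R]

theorem det_one_sub_eq_one_of_lt [DecidableEq n] {α : Type*} [LinearOrder α] (M : Matrix n n R)
    (b : n → α) (hM : ∀ i j, M i j ≠ 0 → b j < b i) : (1 - M).det = 1 := by
  have hzero : ∀ i j, ¬ b j < b i → M i j = 0 := fun i j h => not_not.1 (mt (hM i j) h)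
  have htri : (1 - M).BlockTriangular (OrderDual.toDual ∘ b) := by
    intro i j hij
    have hne : i ≠ j := by rintro rfl; exact lt_irrefl _ hij
    simp [one_apply_ne hne, hzero i j (lt_asymm hij)]
  rw [htri.det]
  refine Finset.prod_eq_one fun a _ => ?_
  suffices (1 - M).toSquareBlock (OrderDual.toDual ∘ b) a = 1 by rw [this, det_one]
  ext ⟨i, hi⟩ ⟨j, hj⟩
  have hb : b i = b j := hi.trans hj.symm
  simp [toSquareBlock_def, one_apply, hzero i j hb.not_gt]

variable {M : Matrix n n R} {S : Finset n}

theorem BlockTriangular.submatrix_mul (hM : M.BlockTriangular (· ∈ S)) (N : Matrix n n R) :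
    ((M * N).submatrix (↑) (↑) : Matrix S S R) =
      (M.submatrix (↑) (↑) : Matrix S S R) * (N.submatrix (↑) (↑) : Matrix S S R) := by
  ext i j
  have hoff : ∀ k ∉ S, M i k * N k j = 0 := fun k hk => by
    rw [hM (Prop.lt_iff_not_and.2 ⟨hk, i.2⟩), zero_mul]
  simp only [submatrix_apply, mul_apply]
  rw [← Finset.sum_subset (Finset.subset_univ S) fun k _ hk => hoff k hk]
  exact (Finset.sum_coe_sort S _).symm

theorem BlockTriangular.submatrix_inv [DecidableEq n] (hM : M.BlockTriangular (· ∈ S))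
    (hdet : IsUnit M.det) :
    (M⁻¹.submatrix (↑) (↑) : Matrix S S R) = (M.submatrix (↑) (↑) : Matrix S S R)⁻¹ :=
  (inv_eq_right_inv (by
    rw [← hM.submatrix_mul, mul_nonsing_inv _ hdet, submatrix_one _ Subtype.val_injective])).symm

theorem BlockTriangular.submatrix_mul_conjTranspose [StarRing R]
    (hM : M.BlockTriangular (· ∈ S)) :
    ((M * Mᴴ).submatrix (↑) (↑) : Matrix S S R) =
      (M.submatrix (↑) (↑) : Matrix S S R) * (M.submatrix (↑) (↑) : Matrix S S R)ᴴ := by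
  rw [hM.submatrix_mul, conjTranspose_submatrix]

theorem inv_smul_nonsing_inv_mul_conjTranspose {K : Type*} [Field K] [StarRing K] [DecidableEq n]
    {N : Matrix n n K} (hN : IsUnit N.det) {c : K} (hc : c ≠ 0) :
    (c • (N⁻¹ * N⁻¹ᴴ))⁻¹ = c⁻¹ • (Nᴴ * N) := by
  refine inv_eq_right_inv ?_
  rw [Matrix.smul_mul, Matrix.mul_smul, smul_smul, mul_inv_cancel₀ hc, one_smul,
    Matrix.mul_assoc, ← Matrix.mul_assoc N⁻¹ᴴ, ← conjTranspose_mul, mul_nonsing_inv _ hN,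
    conjTranspose_one, Matrix.one_mul, nonsing_inv_mul _ hN]

end Matrix

/-- for an ancestral set `A`, `Φ_{AA} = σ (I_A - H_{AA})⁻¹ ((I_A - H_{AA})⁻¹)^*`,
equivalently `(Φ_{AA})⁻¹ = (1/σ)(I_A - H_{AA})^* (I_A - H_{AA})`. -/
theorem submatrix_ancestral {p : ℕ}
    (E : Fin p → Fin p → Prop) (hacyc : Acyclic E)
    (σ : ℝ) (hσ : 0 < σ)
    (H : Matrix (Fin p) (Fin p) ℂ) (hH : ∀ a b : Fin p, H a b ≠ 0 ↔ E b a)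
    (A : Finset (Fin p)) (hA : Ancestral E A) :
    subm (Phi σ H) A A =
      (σ : ℂ) • ((1 - subm H A A)⁻¹ * ((1 - subm H A A)⁻¹)ᴴ) ∧
    (subm (Phi σ H) A A)⁻¹ =
      (σ : ℂ)⁻¹ • ((1 - subm H A A)ᴴ * (1 - subm H A A)) := by
  have _ : IsWellFounded (Fin p) E := ⟨hacyc.wellFounded⟩
  have hrank : ∀ a b, H a b ≠ 0 → IsWellFounded.rank E b < IsWellFounded.rank E a :=
    fun a b h => IsWellFounded.rank_lt_of_rel ((hH a b).1 h)
  have hdet : IsUnit (1 - H).det := by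
    rw [det_one_sub_eq_one_of_lt H _ hrank]
    exact isUnit_one
  have hdetA : IsUnit (1 - subm H A A).det := by
    rw [det_one_sub_eq_one_of_lt (subm H A A) (fun a : A => IsWellFounded.rank E a.1)
      fun a b => hrank a b]
    exact isUnit_one
  have htri : (1 - H).BlockTriangular (· ∈ A) :=
    blockTriangular_one.sub (hA.blockTriangular fun a b => (hH a b).1)
  have _ : Invertible (1 - H) := invertibleOfIsUnitDet _ hdet
  have hinvA : subm (1 - H)⁻¹ A A = (1 - subm H A A)⁻¹ := by
    rw [subm_eq_submatrix, htri.submatrix_inv hdet, submatrix_sub, Pi.sub_apply, Pi.sub_apply,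
      submatrix_one _ Subtype.val_injective, ← subm_eq_submatrix]
  have hΦ :
      subm (Phi σ H) A A = (σ : ℂ) • ((1 - subm H A A)⁻¹ * ((1 - subm H A A)⁻¹)ᴴ) := by
    rw [Phi, subm_eq_submatrix, submatrix_smul, Pi.smul_apply, Pi.smul_apply,
      (blockTriangular_inv_of_blockTriangular htri).submatrix_mul_conjTranspose,
      ← subm_eq_submatrix, hinvA]
  refine ⟨hΦ, ?_⟩
  rw [hΦ]
  exact inv_smul_nonsing_inv_mul_conjTranspose hdetA (Complex.ofReal_ne_zero.2 hσ.ne')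
end
end

section
/- (Lemma 3.3, first part.) Let j ∈ V and let C ⊆ V \ {j} be an ancestral set with pa(j) ⊆ C. Then f(j,C) = σ. -/
open Matrix
open scoped Classical

noncomputable section

/-!
Write `M = (1 - H)⁻¹` and `G = M Mᴴ`, so that `Φ = σ G` and, the Schur complement being
homogeneous, `f(j, C) = σ (G_jj - G_jC G_CC⁻¹ G_Cj)`. Column `j` of the identity `G (1 - H)ᴴ = M`,
together with the fact that row `j` of `H` is supported on `pa(j) ⊆ C`, reads
`G_kj = M_kj + ∑_{c ∈ C} G_kc conj(H_jc)`. As `H` is nilpotent, `M = ∑ Hⁿ`, and `M_kj ≠ 0` forces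
a directed path from `j` to `k`; hence `M_Cj = 0` (`C` is ancestral and misses `j`) and `M_jj = 1`.
So `w = conj(H_jC)` solves `G_CC w = G_Cj`, and `G_jj - G_jC w = 1`.
-/

open Relation

variable {ι : Type*}

namespace Matrix

section Support

variable [Fintype ι] [DecidableEq ι] {R : Type*} [Semiring R] {H : Matrix ι ι R}

theorem exists_ne_zero_of_pow_succ_apply_ne_zero {n : ℕ} {k l : ι}
    (h : (H ^ (n + 1)) k l ≠ 0) : ∃ b, H k b ≠ 0 ∧ (H ^ n) b l ≠ 0 := by
  rw [pow_succ', mul_apply] at h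
  obtain ⟨b, -, hb⟩ := Finset.exists_ne_zero_of_sum_ne_zero h
  exact ⟨b, left_ne_zero_of_mul hb, right_ne_zero_of_mul hb⟩

theorem reflTransGen_of_pow_apply_ne_zero {E : ι → ι → Prop}
    (hH : ∀ a b, H a b ≠ 0 → E b a) :
    ∀ {n : ℕ} {k l : ι}, (H ^ n) k l ≠ 0 → ReflTransGen E l k
  | 0, k, l, h => by
    obtain rfl | hkl := eq_or_ne k l
    · exact .refl
    · simp [one_apply_ne hkl] at h
  | _ + 1, k, _, h => by
    obtain ⟨b, hkb, hbl⟩ := exists_ne_zero_of_pow_succ_apply_ne_zero h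
    exact (reflTransGen_of_pow_apply_ne_zero hH hbl).tail (hH k b hkb)

theorem add_le_of_pow_apply_ne_zero (ht : ι → ℕ) (hH : ∀ a b, H a b ≠ 0 → ht b < ht a) :
    ∀ {n : ℕ} {k l : ι}, (H ^ n) k l ≠ 0 → ht l + n ≤ ht k
  | 0, k, l, h => by
    obtain rfl | hkl := eq_or_ne k l
    · exact le_rfl
    · simp [one_apply_ne hkl] at h
  | _ + 1, k, _, h => by
    obtain ⟨b, hkb, hbl⟩ := exists_ne_zero_of_pow_succ_apply_ne_zero h
    have := add_le_of_pow_apply_ne_zero ht hH hbl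
    have := hH k b hkb
    omega

theorem pow_eq_zero_of_lt (ht : ι → ℕ) (hH : ∀ a b, H a b ≠ 0 → ht b < ht a) {N : ℕ}
    (hN : ∀ i, ht i < N) : H ^ N = 0 := by
  ext k l
  by_contra h
  have := add_le_of_pow_apply_ne_zero ht hH h
  have := hN k
  omega

end Support

variable [Fintype ι] [DecidableEq ι]

theorem smul_inv₀ {K : Type*} [Field K] (c : K) (S : Matrix ι ι K) : (c • S)⁻¹ = c⁻¹ • S⁻¹ := by
  obtain rfl | hc := eq_or_ne c 0
  · simp
  by_cases hS : IsUnit S.det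
  · exact inv_smul' S (Units.mk0 c hc) hS
  · have hcS : ¬ IsUnit (c • S).det := by simpa [det_smul, hc] using hS
    rw [nonsing_inv_apply_not_isUnit _ hS, nonsing_inv_apply_not_isUnit _ hcS, smul_zero]

theorem inv_one_sub_eq_sum_pow {R : Type*} [CommRing R] {H : Matrix ι ι R} {N : ℕ}
    (hN : H ^ N = 0) : (1 - H)⁻¹ = ∑ n ∈ Finset.range N, H ^ n :=
  inv_eq_right_inv (by rw [mul_neg_geom_sum, hN, sub_zero])

theorem inv_mul_conjTranspose_inv_mul_conjTranspose {K : Type*} [CommRing K] [StarRing K]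
    {A : Matrix ι ι K} (hA : IsUnit A.det) : A⁻¹ * A⁻¹ᴴ * Aᴴ = A⁻¹ := by
  rw [Matrix.mul_assoc, ← conjTranspose_mul, mul_nonsing_inv _ hA, conjTranspose_one,
    Matrix.mul_one]

end Matrix

section Acyclic

variable {E : ι → ι → Prop}

theorem mem_of_reflTransGen_of_mem {C : Finset ι}
    (hanc : ∀ c ∈ C, ∀ b, E b c → b ∈ C) {x k : ι} (h : ReflTransGen E x k) (hk : k ∈ C) :
    x ∈ C := by
  induction h with
  | refl => exact hk
  | tail _ hbc ih => exact ih (hanc _ hk _ hbc)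

variable [Fintype ι]

def ancestors (E : ι → ι → Prop) (x : ι) : Finset ι := {y | TransGen E y x}

theorem card_ancestors_lt_of_rel (hacyc : ∀ i, ¬ TransGen E i i) {b i : ι} (h : E b i) :
    (ancestors E b).card < (ancestors E i).card := by
  refine Finset.card_lt_card (Finset.ssubset_iff_of_subset ?_ |>.mpr ⟨b, ?_, ?_⟩)
  · intro y
    simpa [ancestors] using fun hy => hy.tail h
  · simpa [ancestors] using TransGen.single h
  · simpa [ancestors] using hacyc b

theorem card_ancestors_lt_card (hacyc : ∀ i, ¬ TransGen E i i) (x : ι) :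
    (ancestors E x).card < Fintype.card ι :=
  Finset.card_lt_univ_of_notMem (x := x) (by simpa [ancestors] using hacyc x)

variable [DecidableEq ι] {R : Type*} [CommRing R] {H : Matrix ι ι R}

theorem pow_card_eq_zero_of_acyclic (hacyc : ∀ i, ¬ TransGen E i i)
    (hH : ∀ a b, H a b ≠ 0 → E b a) : H ^ Fintype.card ι = 0 :=
  Matrix.pow_eq_zero_of_lt (fun x => (ancestors E x).card)
    (fun a b hab => card_ancestors_lt_of_rel hacyc (hH a b hab)) (card_ancestors_lt_card hacyc)

theorem inv_one_sub_apply_eq_zero_of_not_reflTransGen (hacyc : ∀ i, ¬ TransGen E i i)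
    (hH : ∀ a b, H a b ≠ 0 → E b a) {j k : ι} (h : ¬ ReflTransGen E j k) :
    (1 - H)⁻¹ k j = 0 := by
  rw [Matrix.inv_one_sub_eq_sum_pow (pow_card_eq_zero_of_acyclic hacyc hH), Matrix.sum_apply]
  exact Finset.sum_eq_zero fun n _ =>
    not_ne_iff.mp fun hn => h (Matrix.reflTransGen_of_pow_apply_ne_zero hH hn)

theorem inv_one_sub_apply_self (hacyc : ∀ i, ¬ TransGen E i i)
    (hH : ∀ a b, H a b ≠ 0 → E b a) (j : ι) : (1 - H)⁻¹ j j = 1 := by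
  rw [Matrix.inv_one_sub_eq_sum_pow (pow_card_eq_zero_of_acyclic hacyc hH), Matrix.sum_apply,
    Finset.sum_eq_single 0]
  · simp
  · rintro (_ | m) _ hm
    · exact absurd rfl hm
    · by_contra h
      obtain ⟨b, hjb, hbj⟩ := Matrix.exists_ne_zero_of_pow_succ_apply_ne_zero h
      exact hacyc j (.tail' (Matrix.reflTransGen_of_pow_apply_ne_zero hH hbj) (hH j b hjb))
  · exact fun h => absurd (Finset.mem_range.mpr (Fintype.card_pos_iff.mpr ⟨j⟩)) h

end Acyclic

variable [DecidableEq ι] {K : Type*}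

def schurCompl [CommRing K] (G : Matrix ι ι K) (i : ι) (C : Finset ι) : K :=
  G i i - (fun c : C => G i c) ⬝ᵥ ((G.submatrix (↑) (↑) : Matrix C C K)⁻¹ *ᵥ fun c : C => G c i)

theorem schurCompl_eq_of_mulVec_eq [CommRing K] {G : Matrix ι ι K} {i : ι} {C : Finset ι}
    (hC : IsUnit (G.submatrix (↑) (↑) : Matrix C C K).det) {w : C → K}
    (hw : G.submatrix (↑) (↑) *ᵥ w = fun c : C => G c i) :
    schurCompl G i C = G i i - (fun c : C => G i c) ⬝ᵥ w := by
  rw [schurCompl, ← hw, mulVec_mulVec, nonsing_inv_mul _ hC, one_mulVec]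

theorem schurCompl_smul [Field K] (a : K) (G : Matrix ι ι K) (i : ι) (C : Finset ι) :
    schurCompl (a • G) i C = a * schurCompl G i C := by
  obtain rfl | ha := eq_or_ne a 0
  · simp [schurCompl]
  have hS : ((a • G).submatrix (↑) (↑) : Matrix C C K) = a • G.submatrix (↑) (↑) := rfl
  have hv (v : C → K) : (fun c => a * v c) = a • v := rfl
  simp only [schurCompl, hS, Matrix.smul_inv₀, Matrix.smul_apply, smul_eq_mul, hv,
    smul_mulVec, mulVec_smul, dotProduct_smul, smul_dotProduct]
  field_simp

variable [Fintype ι]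

theorem gram_inv_one_sub_apply [CommRing K] [StarRing K] {H : Matrix ι ι K}
    (hA : IsUnit (1 - H).det) {C : Finset ι} {j : ι} (hrow : ∀ b ∉ C, H j b = 0) (k : ι) :
    ((1 - H)⁻¹ * (1 - H)⁻¹ᴴ : Matrix ι ι K) k j =
      (1 - H)⁻¹ k j + ∑ c : C, ((1 - H)⁻¹ * (1 - H)⁻¹ᴴ : Matrix ι ι K) k c * star (H j c) := by
  set G := (1 - H)⁻¹ * (1 - H)⁻¹ᴴ
  have hG : G - G * Hᴴ = (1 - H)⁻¹ := by
    simpa [Matrix.mul_sub] using Matrix.inv_mul_conjTranspose_inv_mul_conjTranspose hA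
  have hGH : (G * Hᴴ) k j = ∑ c : C, G k c * star (H j c) := by
    rw [mul_apply, ← Finset.sum_subset (Finset.subset_univ C) fun b _ hb => ?_,
      ← Finset.sum_coe_sort C]
    · rfl
    · simp [hrow b hb]
  rw [← hG, Matrix.sub_apply, hGH, sub_add_cancel]

open scoped ComplexOrder in
theorem schurCompl_gram_inv_one_sub_eq_one {𝕜 : Type*} [RCLike 𝕜]
    {E : ι → ι → Prop} {H : Matrix ι ι 𝕜} (hacyc : ∀ i, ¬ TransGen E i i)
    (hH : ∀ a b, H a b ≠ 0 → E b a) {j : ι} {C : Finset ι} (hjC : j ∉ C)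
    (hanc : ∀ c ∈ C, ∀ b, E b c → b ∈ C) (hpa : ∀ b, E b j → b ∈ C) :
    schurCompl ((1 - H)⁻¹ * (1 - H)⁻¹ᴴ) j C = 1 := by
  have hunit : IsUnit (1 - H) :=
    IsNilpotent.isUnit_one_sub ⟨_, pow_card_eq_zero_of_acyclic hacyc hH⟩
  have hA : IsUnit (1 - H).det := (isUnit_iff_isUnit_det _).mp hunit
  have hrow : ∀ b ∉ C, H j b = 0 := fun b hb => not_ne_iff.mp fun h => hb (hpa b (hH j b h))
  have hMC : ∀ c ∈ C, (1 - H)⁻¹ c j = 0 := fun c hc =>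
    inv_one_sub_apply_eq_zero_of_not_reflTransGen hacyc hH fun hjc =>
      hjC (mem_of_reflTransGen_of_mem hanc hjc hc)
  have hGC : IsUnit (((1 - H)⁻¹ * (1 - H)⁻¹ᴴ).submatrix (↑) (↑) : Matrix C C 𝕜).det := by
    have hinj := vecMul_injective_iff_isUnit.mpr (isUnit_nonsing_inv_iff.mpr hunit)
    exact (isUnit_iff_isUnit_det _).mp
      ((PosDef.mul_conjTranspose_self _ hinj).submatrix Subtype.val_injective).isUnit
  rw [schurCompl_eq_of_mulVec_eq hGC (w := fun c => star (H j c)), gram_inv_one_sub_apply hA hrow,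
    inv_one_sub_apply_self hacyc hH, dotProduct, add_sub_cancel_right]
  funext c
  rw [gram_inv_one_sub_apply hA hrow, hMC c c.2, zero_add]
  rfl

theorem condPSD_eq_sigma_of_parents_subset_general {p : ℕ}
    (E : Fin p → Fin p → Prop) (hacyc : Acyclic E)
    (σ : ℝ)
    (H : Matrix (Fin p) (Fin p) ℂ) (hH : ∀ a b : Fin p, H a b ≠ 0 ↔ E b a)
    (j : Fin p) (C : Finset (Fin p)) (hjC : j ∉ C)
    (hanc : Ancestral E C) (hpa : parents E j ⊆ ↑C) :
    condPSD σ H j C = σ := by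
  have hG : schurCompl ((1 - H)⁻¹ * (1 - H)⁻¹ᴴ) j C = 1 :=
    schurCompl_gram_inv_one_sub_eq_one hacyc (fun a b => (hH a b).1) hjC hanc fun _ hb => hpa hb
  calc condPSD σ H j C = (schurCompl (Phi σ H) j C).re := rfl
    _ = σ := by rw [Phi, schurCompl_smul, hG, mul_one, Complex.ofReal_re]

/-- Lemma 3.3, first part: if `C ⊆ V \ {j}` is ancestral and `pa(j) ⊆ C`,
then `f(j,C) = σ`. -/
theorem condPSD_eq_sigma_of_parents_subset {p : ℕ}
    (E : Fin p → Fin p → Prop) (hacyc : Acyclic E)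
    (σ : ℝ) (hσ : 0 < σ)
    (H : Matrix (Fin p) (Fin p) ℂ) (hH : ∀ a b : Fin p, H a b ≠ 0 ↔ E b a)
    (j : Fin p) (C : Finset (Fin p)) (hjC : j ∉ C)
    (hanc : Ancestral E C) (hpa : parents E j ⊆ ↑C) :
    condPSD σ H j C = σ :=
  condPSD_eq_sigma_of_parents_subset_general E hacyc σ H hH j C hjC hanc hpa
end
end

section
/- Let C ⊆ A ⊆ V with both C and A ancestral sets, and let D := A \ C. Then the Schur complement satisfies Φ_{DD} − Φ_{DC} Φ_{CC}^{-1} Φ_{CD} = σ (I_D − H_{DD})^{-1} ((I_D − H_{DD})^{-1})^*, or equivalently (Φ_{DD} − Φ_{DC} Φ_{CC}^{-1} Φ_{CD})^{-1} = (1/σ)(I_D − H_{DD})^* (I_D − H_{DD}). -/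
open Matrix
open scoped Classical

noncomputable section

/-!
Write `N = (I - H)⁻¹`, so `Φ = σ N Nᴴ`. Acyclicity yields a rank on vertices that increases
strictly along edges; in that order `I - H` is unitriangular, so `det (I - H) = 1`. An ancestral
set `S` makes `I - H`, hence also `N`, block triangular for the split `S | Sᶜ`. So with
`D = A \ C`, the restriction of `N` to `A` is block lower triangular, `[[N_CC, 0], [N_DC, N_DD]]`,
with `N_CC = (I_C - H_CC)⁻¹` and `N_DD = (I_D - H_DD)⁻¹`. Then
`Φ_AA = σ [[N_CC N_CCᴴ, N_CC N_DCᴴ], [N_DC N_CCᴴ, N_DC N_DCᴴ + N_DD N_DDᴴ]]`,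
and the Schur complement of its `C` block is `σ N_DD N_DDᴴ`.
-/

section Algebra

variable {m n K : Type*} [Field K] [StarRing K]

theorem inv_smul_mul_conjTranspose [Fintype n] [DecidableEq n] {c : K} (hc : c ≠ 0)
    {L R : Matrix n n K} (h : L * R = 1) :
    (c • (R * Rᴴ))⁻¹ = c⁻¹ • (Lᴴ * L) := by
  apply Matrix.inv_eq_left_inv
  rw [Matrix.smul_mul, Matrix.mul_smul, smul_smul, inv_mul_cancel₀ hc, one_smul,
    Matrix.mul_assoc, ← Matrix.mul_assoc L, h, Matrix.one_mul, ← conjTranspose_mul,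
    mul_eq_one_comm.mp h, conjTranspose_one]

theorem schur_complement_smul_gram [Fintype m] [DecidableEq m] [Fintype n] {c : K} (hc : c ≠ 0)
    {L P : Matrix m m K} (h : L * P = 1) (Q : Matrix n m K) (R : Matrix n n K) :
    c • (Q * Qᴴ + R * Rᴴ) - c • (Q * Pᴴ) * (c • (P * Pᴴ))⁻¹ * c • (P * Qᴴ) = c • (R * Rᴴ) := by
  have hQ : Q * Pᴴ * (Lᴴ * L) * (P * Qᴴ) = Q * Qᴴ := by
    simp only [Matrix.mul_assoc]
    rw [← Matrix.mul_assoc L, h, Matrix.one_mul, ← Matrix.mul_assoc Pᴴ, ← conjTranspose_mul, h,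
      conjTranspose_one, Matrix.one_mul]
  simp only [inv_smul_mul_conjTranspose hc h, Matrix.smul_mul, Matrix.mul_smul, smul_smul]
  rw [inv_mul_cancel₀ hc, mul_one, hQ, smul_add, add_sub_cancel_left]

end Algebra

theorem blockTriangular_mem_iff {n R : Type*} [Zero R] {M : Matrix n n R} {S : Set n} :
    M.BlockTriangular (· ∈ S) ↔ ∀ i ∈ S, ∀ j ∉ S, M i j = 0 := by
  simp only [BlockTriangular, lt_iff_le_not_ge, le_Prop_eq]
  grind

section Submatrix

variable {p : ℕ}

theorem subm_conjTranspose (M : Matrix (Fin p) (Fin p) ℂ) (S T : Finset (Fin p)) :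
    subm Mᴴ S T = (subm M T S)ᴴ :=
  rfl

theorem subm_smul (c : ℂ) (M : Matrix (Fin p) (Fin p) ℂ) (S T : Finset (Fin p)) :
    subm (c • M) S T = c • subm M S T :=
  rfl

theorem subm_sub (M K : Matrix (Fin p) (Fin p) ℂ) (S T : Finset (Fin p)) :
    subm (M - K) S T = subm M S T - subm K S T :=
  rfl

theorem subm_one (S : Finset (Fin p)) : subm (1 : Matrix (Fin p) (Fin p) ℂ) S S = 1 := by
  ext s t
  simp only [subm, of_apply, one_apply, Subtype.ext_iff]

theorem subm_mul_of_forall_mul_eq_zero (M K : Matrix (Fin p) (Fin p) ℂ) {S T U : Finset (Fin p)}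
    (h : ∀ s ∈ S, ∀ t ∈ T, ∀ j ∉ U, M s j * K j t = 0) :
    subm (M * K) S T = subm M S U * subm K U T := by
  ext s t
  simp only [subm, of_apply, mul_apply]
  rw [← Finset.sum_subset (Finset.subset_univ U) fun j _ hj => h s s.2 t t.2 j hj]
  exact (Finset.sum_coe_sort U _).symm

theorem subm_mul_subm_eq_add_sdiff (M K : Matrix (Fin p) (Fin p) ℂ) {C A : Finset (Fin p)}
    (hCA : C ⊆ A) (S T : Finset (Fin p)) :
    subm M S A * subm K A T = subm M S C * subm K C T + subm M S (A \ C) * subm K (A \ C) T := by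
  ext s t
  simp only [subm, of_apply, mul_apply, Matrix.add_apply]
  rw [Finset.sum_coe_sort A (fun j => M s j * K j t),
    Finset.sum_coe_sort C (fun j => M s j * K j t),
    Finset.sum_coe_sort (A \ C) (fun j => M s j * K j t), add_comm, Finset.sum_sdiff hCA]

theorem subm_mul_of_blockTriangular {M : Matrix (Fin p) (Fin p) ℂ} {S : Finset (Fin p)}
    (hM : M.BlockTriangular (· ∈ S)) (K : Matrix (Fin p) (Fin p) ℂ) (T : Finset (Fin p)) :
    subm (M * K) S T = subm M S S * subm K S T :=
  subm_mul_of_forall_mul_eq_zero M K fun s hs _ _ j hj => by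
    rw [blockTriangular_mem_iff.mp hM s hs j hj, zero_mul]

theorem subm_sdiff_mul_of_blockTriangular {M K : Matrix (Fin p) (Fin p) ℂ} {C A : Finset (Fin p)}
    (hM : M.BlockTriangular (· ∈ A)) (hK : K.BlockTriangular (· ∈ C)) :
    subm (M * K) (A \ C) (A \ C) = subm M (A \ C) (A \ C) * subm K (A \ C) (A \ C) := by
  refine subm_mul_of_forall_mul_eq_zero M K fun s hs t ht j hj => ?_
  rw [Finset.mem_sdiff] at hs ht
  by_cases hjA : j ∈ A
  · rw [blockTriangular_mem_iff.mp hK j (by grind) t ht.2, mul_zero]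
  · rw [blockTriangular_mem_iff.mp hM s hs.1 j hjA, zero_mul]

end Submatrix

theorem exists_rank_of_acyclic {α : Type*} [Fintype α] {r : α → α → Prop}
    (hr : ∀ a, ¬ Relation.TransGen r a a) : ∃ f : α → ℕ, ∀ a b, r a b → f a < f b := by
  classical
  refine ⟨fun b => (Finset.univ.filter (Relation.TransGen r · b)).card,
    fun a b hab => Finset.card_lt_card ?_⟩
  refine (Finset.ssubset_iff_of_subset fun x hx => ?_).mpr ⟨a, ?_, ?_⟩
  · simp only [Finset.mem_filter, Finset.mem_univ, true_and] at hx ⊢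
    exact hx.tail hab
  · simpa using Relation.TransGen.single hab
  · simpa using hr a

theorem det_one_sub_eq_one_of_rank {n R : Type*} [Fintype n] [DecidableEq n] [CommRing R]
    {M : Matrix n n R} (f : n → ℕ) (hf : ∀ i j, M i j ≠ 0 → f j < f i) : (1 - M).det = 1 := by
  have hM : ∀ i j, f i ≤ f j → M i j = 0 := fun i j hij => by
    by_contra h
    exact (hf i j h).not_ge hij
  have htri : (1 - M).BlockTriangular (OrderDual.toDual ∘ f) := fun i j hij => by
    have hne : i ≠ j := fun h => (h ▸ hij).false
    rw [Matrix.sub_apply, one_apply_ne hne, hM i j hij.le, sub_zero]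
  rw [htri.det]
  refine Finset.prod_eq_one fun k _ => ?_
  have hblock : (1 - M).toSquareBlock (OrderDual.toDual ∘ f) k = 1 := by
    ext ⟨i, hi⟩ ⟨j, hj⟩
    have hij : f i = f j := OrderDual.toDual.injective (hi.trans hj.symm)
    simp [toSquareBlock_def, Matrix.sub_apply, one_apply, hM i j hij.le]
  rw [hblock, det_one]

theorem blockTriangular_one_sub_of_ancestral {p : ℕ} {R : Type*} [Ring R]
    {E : Fin p → Fin p → Prop} {H : Matrix (Fin p) (Fin p) R} (hH : ∀ a b, H a b ≠ 0 → E b a)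
    {S : Finset (Fin p)} (hS : Ancestral E S) : (1 - H).BlockTriangular (· ∈ S) := by
  refine blockTriangular_mem_iff.mpr fun i hi j hj => ?_
  have hHij : H i j = 0 := by
    by_contra h
    exact hj (hS i hi j (hH i j h))
  rw [Matrix.sub_apply, one_apply_ne (ne_of_mem_of_not_mem hi hj), hHij, sub_zero]

theorem subm_schur_complement_smul_gram {p : ℕ} {N Φ : Matrix (Fin p) (Fin p) ℂ} {c : ℂ}
    (hc : c ≠ 0) (hΦ : Φ = c • (N * Nᴴ)) {C A : Finset (Fin p)} (hCA : C ⊆ A)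
    (hNC : N.BlockTriangular (· ∈ C)) (hNA : N.BlockTriangular (· ∈ A))
    {L : Matrix C C ℂ} (hLN : L * subm N C C = 1) :
    subm Φ (A \ C) (A \ C) - subm Φ (A \ C) C * (subm Φ C C)⁻¹ * subm Φ C (A \ C) =
      c • (subm N (A \ C) (A \ C) * (subm N (A \ C) (A \ C))ᴴ) := by
  have hNC' := blockTriangular_mem_iff.mp hNC
  have hCC : subm (N * Nᴴ) C C = subm N C C * (subm N C C)ᴴ := by
    rw [subm_mul_of_blockTriangular hNC, subm_conjTranspose]
  have hCD : subm (N * Nᴴ) C (A \ C) = subm N C C * (subm N (A \ C) C)ᴴ := by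
    rw [subm_mul_of_blockTriangular hNC, subm_conjTranspose]
  have hDC : subm (N * Nᴴ) (A \ C) C = subm N (A \ C) C * (subm N C C)ᴴ := by
    rw [subm_mul_of_forall_mul_eq_zero (U := C) _ _ fun _ _ t ht j hj => by
      rw [conjTranspose_apply, hNC' t ht j hj, star_zero, mul_zero], subm_conjTranspose]
  have hDD : subm (N * Nᴴ) (A \ C) (A \ C) = subm N (A \ C) C * (subm N (A \ C) C)ᴴ +
      subm N (A \ C) (A \ C) * (subm N (A \ C) (A \ C))ᴴ := by
    rw [subm_mul_of_forall_mul_eq_zero (U := A) _ _ fun s hs _ _ j hj => by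
      rw [blockTriangular_mem_iff.mp hNA s (Finset.mem_sdiff.mp hs).1 j hj, zero_mul],
      subm_mul_subm_eq_add_sdiff _ _ hCA, subm_conjTranspose, subm_conjTranspose]
  subst hΦ
  simp only [subm_smul, hCC, hCD, hDC, hDD]
  exact schur_complement_smul_gram hc hLN _ _

/-- for ancestral sets `C ⊆ A` and `D := A \ C`, the Schur complement satisfies
`Φ_{DD} - Φ_{DC} Φ_{CC}⁻¹ Φ_{CD} = σ (I_D - H_{DD})⁻¹ ((I_D - H_{DD})⁻¹)^*`, equivalently
`(Φ_{DD} - Φ_{DC} Φ_{CC}⁻¹ Φ_{CD})⁻¹ = (1/σ)(I_D - H_{DD})^* (I_D - H_{DD})`. -/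
theorem schur_complement_ancestral {p : ℕ}
    (E : Fin p → Fin p → Prop) (hacyc : Acyclic E)
    (σ : ℝ) (hσ : 0 < σ)
    (H : Matrix (Fin p) (Fin p) ℂ) (hH : ∀ a b : Fin p, H a b ≠ 0 ↔ E b a)
    (C A : Finset (Fin p)) (hCA : C ⊆ A)
    (hancC : Ancestral E C) (hancA : Ancestral E A) :
    subm (Phi σ H) (A \ C) (A \ C) -
        subm (Phi σ H) (A \ C) C * (subm (Phi σ H) C C)⁻¹ * subm (Phi σ H) C (A \ C) =
      (σ : ℂ) • ((1 - subm H (A \ C) (A \ C))⁻¹ * ((1 - subm H (A \ C) (A \ C))⁻¹)ᴴ) ∧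
    (subm (Phi σ H) (A \ C) (A \ C) -
        subm (Phi σ H) (A \ C) C * (subm (Phi σ H) C C)⁻¹ * subm (Phi σ H) C (A \ C))⁻¹ =
      (σ : ℂ)⁻¹ • ((1 - subm H (A \ C) (A \ C))ᴴ * (1 - subm H (A \ C) (A \ C))) := by
  have hσ' : (σ : ℂ) ≠ 0 := by exact_mod_cast hσ.ne'
  have hE : ∀ a b, H a b ≠ 0 → E b a := fun a b => (hH a b).mp
  obtain ⟨f, hf⟩ := exists_rank_of_acyclic hacyc
  have hdet : IsUnit (1 - H).det := by
    rw [det_one_sub_eq_one_of_rank f fun a b h => hf b a (hE a b h)]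
    exact isUnit_one
  have : Invertible (1 - H) := (1 - H).invertibleOfIsUnitDet hdet
  have hLC := blockTriangular_one_sub_of_ancestral hE hancC
  have hLA := blockTriangular_one_sub_of_ancestral hE hancA
  have hNC := blockTriangular_inv_of_blockTriangular hLC
  have hNA := blockTriangular_inv_of_blockTriangular hLA
  have hC : subm (1 - H) C C * subm (1 - H)⁻¹ C C = 1 := by
    rw [← subm_mul_of_blockTriangular hLC, mul_nonsing_inv _ hdet, subm_one]
  have hD : subm (1 - H) (A \ C) (A \ C) * subm (1 - H)⁻¹ (A \ C) (A \ C) = 1 := by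
    rw [← subm_sdiff_mul_of_blockTriangular hLA hNC, mul_nonsing_inv _ hdet, subm_one]
  have hschur := subm_schur_complement_smul_gram (Φ := Phi σ H) hσ' rfl hCA hNC hNA hC
  rw [← subm_one (A \ C), ← subm_sub, Matrix.inv_eq_right_inv hD, hschur]
  exact ⟨rfl, inv_smul_mul_conjTranspose hσ' hD⟩
end
end

section
/- (Lemma 3.3, second part, combined with Lemma 3.5.) Suppose β > 0 is such that |H_{ik}| ≥ β for every edge (k,i) ∈ E. Let j ∈ V and let C ⊆ V \ {j} be an ancestral set with pa(j) ⊄ C. Then f(j,C) ≥ σ(1 + β²) > σ. -/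
open Matrix
open scoped Classical

noncomputable section

/-! Write `Φ = σ A Aᴴ` with `A = (1 - H)⁻¹`. For `x = Φ_CC⁻¹ Φ_Cj` and `w = e_j - x` (with `x`
extended by zero off `C`), the Schur complement `f(j,C)` equals `wᴴ Φ w = σ ‖Aᴴ w‖²`. The vector
`u = Aᴴ w` solves `u m = w m + ∑ i, conj (H i m) u i`, a recursion over the children of `m`, so
`u` vanishes outside `C ∪ an(j)`; hence `u j = 1`, and `u k = conj (H j k)` for a parent `k ∉ C`
of `j` none of whose children is a proper ancestor of `j`. So `‖u‖² ≥ 1 + |H j k|² ≥ 1 + β²`. -/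
open Relation

theorem Acyclic.wellFounded_swap {p : ℕ} {E : Fin p → Fin p → Prop} (hE : Acyclic E) :
    WellFounded (Function.swap E) := by
  have : IsTrans (Fin p) (TransGen (Function.swap E)) := ⟨fun _ _ _ => TransGen.trans⟩
  have : Std.Irrefl (TransGen (Function.swap E)) := ⟨fun a ha => hE a (transGen_swap.mp ha)⟩
  exact Subrelation.wf TransGen.single (Finite.wellFounded_of_trans_of_irrefl _)

theorem Acyclic.exists_parent_not_mem {p : ℕ} {E : Fin p → Fin p → Prop} (hE : Acyclic E)
    {C : Finset (Fin p)} (hC : Ancestral E C) {j : Fin p} (hpa : ¬ parents E j ⊆ ↑C) :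
    ∃ k, E k j ∧ k ∉ C ∧ ∀ i, E k i → ¬ TransGen E i j := by
  obtain ⟨k₀, hk₀j, hk₀C⟩ := Set.not_subset.mp hpa
  obtain ⟨k, ⟨hkC, hkj⟩, hmin⟩ := hE.wellFounded_swap.has_min {k | k ∉ C ∧ TransGen E k j}
    ⟨k₀, hk₀C, .single hk₀j⟩
  have hchild : ∀ i, E k i → ¬ TransGen E i j := fun i hki hij =>
    hmin i ⟨fun hiC => hkC (hC i hiC k hki), hij⟩ hki
  obtain ⟨i, hki, hij⟩ := TransGen.head'_iff.mp hkj
  rcases reflTransGen_iff_eq_or_transGen.mp hij with rfl | hij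
  · exact ⟨k, hki, hkC, hchild⟩
  · exact absurd hij (hchild i hki)

section OneSub

variable {p : ℕ} {H : Matrix (Fin p) (Fin p) ℂ} {u w : Fin p → ℂ}

theorem eq_add_sum_of_conjTranspose_one_sub_mulVec (h : (1 - H)ᴴ *ᵥ u = w) (m : Fin p) :
    u m = w m + ∑ i, star (H i m) * u i := by
  have hm := congrFun h m
  rw [conjTranspose_sub, conjTranspose_one, sub_mulVec, one_mulVec, Pi.sub_apply] at hm
  rw [← hm]
  exact (sub_add_cancel _ _).symm

theorem eq_add_mul_of_conjTranspose_one_sub_mulVec (h : (1 - H)ᴴ *ᵥ u = w) {m j : Fin p}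
    (hu : ∀ i ≠ j, H i m ≠ 0 → u i = 0) : u m = w m + star (H j m) * u j := by
  rw [eq_add_sum_of_conjTranspose_one_sub_mulVec h m, Finset.sum_eq_single j]
  · intro i _ hij
    by_cases hHim : H i m = 0
    · rw [hHim, star_zero, zero_mul]
    · rw [hu i hij hHim, mul_zero]
  · exact fun hj => absurd (Finset.mem_univ j) hj

theorem Acyclic.eq_zero_of_conjTranspose_one_sub_mulVec {E : Fin p → Fin p → Prop}
    (hE : Acyclic E) (hH : ∀ a b, H a b ≠ 0 → E b a) {D : Set (Fin p)}
    (hD : ∀ m i, E m i → i ∈ D → m ∈ D) (h : (1 - H)ᴴ *ᵥ u = w) (hw : ∀ m ∉ D, w m = 0) :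
    ∀ m ∉ D, u m = 0 := by
  intro m
  induction m using hE.wellFounded_swap.induction with
  | _ m ih =>
    intro hm
    rw [eq_add_sum_of_conjTranspose_one_sub_mulVec h m, hw m hm, zero_add]
    refine Finset.sum_eq_zero fun i _ => ?_
    by_cases hHim : H i m = 0
    · rw [hHim, star_zero, zero_mul]
    · have hmi := hH i m hHim
      rw [ih i hmi fun hi => hm (hD m i hmi hi), mul_zero]

theorem Acyclic.isUnit_one_sub {E : Fin p → Fin p → Prop} (hE : Acyclic E)
    (hH : ∀ a b, H a b ≠ 0 → E b a) : IsUnit (1 - H) := by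
  rw [← isUnit_conjTranspose, ← mulVec_injective_iff_isUnit]
  intro u v huv
  have h0 : (1 - H)ᴴ *ᵥ (u - v) = 0 := by rw [mulVec_sub, huv, sub_self]
  funext m
  exact sub_eq_zero.mp <| hE.eq_zero_of_conjTranspose_one_sub_mulVec hH (D := ∅) (by simp) h0
    (fun _ _ => rfl) m (Set.notMem_empty m)

end OneSub

section ExtendByZero

variable {ι R : Type*} [NonUnitalNonAssocSemiring R] {C : Finset ι}

def extendByZero (C : Finset ι) (x : C → R) : ι → R :=
  fun m => if h : m ∈ C then x ⟨m, h⟩ else 0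

theorem extendByZero_of_notMem (x : C → R) {m : ι} (hm : m ∉ C) : extendByZero C x m = 0 :=
  dif_neg hm

theorem star_extendByZero [StarRing R] (x : C → R) :
    star (extendByZero C x) = extendByZero C (star x) := by
  funext m
  by_cases hm : m ∈ C <;> simp [extendByZero, hm]

theorem dotProduct_extendByZero [Fintype ι] (v : ι → R) (x : C → R) :
    v ⬝ᵥ extendByZero C x = (fun c : C => v c) ⬝ᵥ x := by
  rw [dotProduct, dotProduct, ← Finset.sum_subset (Finset.subset_univ C), ← Finset.sum_coe_sort C]
  · exact Finset.sum_congr rfl fun c _ => by rw [extendByZero, dif_pos c.2]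
  · intro m _ hm
    rw [extendByZero_of_notMem x hm, mul_zero]

theorem extendByZero_dotProduct [Fintype ι] (x : C → R) (v : ι → R) :
    extendByZero C x ⬝ᵥ v = x ⬝ᵥ (fun c : C => v c) := by
  rw [dotProduct, dotProduct, ← Finset.sum_subset (Finset.subset_univ C), ← Finset.sum_coe_sort C]
  · exact Finset.sum_congr rfl fun c _ => by rw [extendByZero, dif_pos c.2]
  · intro m _ hm
    rw [extendByZero_of_notMem x hm, zero_mul]

end ExtendByZero

theorem mulVec_extendByZero_apply {p : ℕ} (Φ : Matrix (Fin p) (Fin p) ℂ) {C : Finset (Fin p)}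
    (x : C → ℂ) (c : C) : (Φ *ᵥ extendByZero C x) c = (subm Φ C C *ᵥ x) c :=
  dotProduct_extendByZero _ x

theorem star_dotProduct_mulVec_single_sub_extendByZero {p : ℕ} (Φ : Matrix (Fin p) (Fin p) ℂ)
    {C : Finset (Fin p)} {j : Fin p} {x : C → ℂ} (hx : subm Φ C C *ᵥ x = fun c : C => Φ c j) :
    star (Pi.single j 1 - extendByZero C x) ⬝ᵥ Φ *ᵥ (Pi.single j 1 - extendByZero C x)
      = Φ j j - (fun c : C => Φ j c) ⬝ᵥ x := by
  have hcross : extendByZero C (star x) ⬝ᵥ Φ *ᵥ extendByZero C x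
      = extendByZero C (star x) ⬝ᵥ Φ *ᵥ Pi.single j 1 := by
    simp only [extendByZero_dotProduct, mulVec_extendByZero_apply, hx, mulVec_single_one]
    rfl
  rw [star_sub, star_extendByZero, Pi.star_single, star_one, mulVec_sub, sub_dotProduct,
    dotProduct_sub, dotProduct_sub, hcross, sub_self, sub_zero, single_one_dotProduct,
    single_one_dotProduct, mulVec_single_one, ← dotProduct_extendByZero]
  rfl

section Phi

open scoped ComplexOrder

variable {p : ℕ} {σ : ℝ} {H : Matrix (Fin p) (Fin p) ℂ}

theorem posDef_Phi (hσ : 0 < σ) (hH : IsUnit (1 - H)) : (Phi σ H).PosDef := by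
  refine PosDef.smul (PosDef.mul_conjTranspose_self _ ?_) (Complex.zero_lt_real.mpr hσ)
  exact vecMul_injective_iff_isUnit.mpr (isUnit_nonsing_inv_iff.mpr hH)

theorem re_star_dotProduct_Phi_mulVec (v : Fin p → ℂ) :
    (star v ⬝ᵥ Phi σ H *ᵥ v).re = σ * ∑ i, Complex.normSq ((((1 - H)⁻¹)ᴴ *ᵥ v) i) := by
  have hstar : star v ᵥ* (1 - H)⁻¹ = star (((1 - H)⁻¹)ᴴ *ᵥ v) := by
    rw [star_mulVec, conjTranspose_conjTranspose]
  rw [Phi, smul_mulVec, dotProduct_smul, ← mulVec_mulVec, dotProduct_mulVec, hstar, dotProduct,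
    smul_eq_mul, Complex.re_ofReal_mul, Complex.re_sum]
  simp only [Pi.star_apply, Complex.star_def, ← Complex.normSq_eq_conj_mul_self, Complex.ofReal_re]

theorem exists_condPSD_eq_mul_sum_normSq (hσ : 0 < σ) (hH : IsUnit (1 - H)) (j : Fin p)
    (C : Finset (Fin p)) : ∃ (x : C → ℂ) (u : Fin p → ℂ),
      (1 - H)ᴴ *ᵥ u = Pi.single j 1 - extendByZero C x ∧
      condPSD σ H j C = σ * ∑ i, Complex.normSq (u i) := by
  set x := (subm (Phi σ H) C C)⁻¹ *ᵥ fun c : C => Phi σ H c j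
  have hsub : IsUnit (subm (Phi σ H) C C).det :=
    (isUnit_iff_isUnit_det _).mp ((posDef_Phi hσ hH).submatrix Subtype.val_injective).isUnit
  have hx : subm (Phi σ H) C C *ᵥ x = fun c : C => Phi σ H c j := by
    rw [mulVec_mulVec, mul_nonsing_inv _ hsub, one_mulVec]
  refine ⟨x, ((1 - H)⁻¹)ᴴ *ᵥ (Pi.single j 1 - extendByZero C x), ?_, ?_⟩
  · rw [mulVec_mulVec, conjTranspose_nonsing_inv, mul_nonsing_inv _
      ((isUnit_iff_isUnit_det _).mp ((isUnit_conjTranspose _).mpr hH)), one_mulVec]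
  · rw [← re_star_dotProduct_Phi_mulVec, star_dotProduct_mulVec_single_sub_extendByZero _ hx]
    rfl

end Phi

section Solution

variable {p : ℕ} {E : Fin p → Fin p → Prop} {H : Matrix (Fin p) (Fin p) ℂ} {C : Finset (Fin p)}
  {j : Fin p} {x : C → ℂ} {u : Fin p → ℂ}

theorem single_sub_extendByZero_of_notMem {m : Fin p} (hm : m ∉ C) :
    (Pi.single j 1 - extendByZero C x : Fin p → ℂ) m = (Pi.single j 1 : Fin p → ℂ) m := by
  rw [Pi.sub_apply, extendByZero_of_notMem x hm, sub_zero]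

theorem Acyclic.eq_zero_of_not_mem_of_not_reflTransGen (hE : Acyclic E)
    (hH : ∀ a b, H a b ≠ 0 → E b a) (hC : Ancestral E C)
    (hu : (1 - H)ᴴ *ᵥ u = Pi.single j 1 - extendByZero C x) {m : Fin p} (hmC : m ∉ C)
    (hmj : ¬ ReflTransGen E m j) : u m = 0 := by
  refine hE.eq_zero_of_conjTranspose_one_sub_mulVec hH (D := {m | m ∈ C ∨ ReflTransGen E m j})
    ?_ hu (fun m hm => ?_) m (not_or.mpr ⟨hmC, hmj⟩)
  · rintro m i hmi (hiC | hij)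
    exacts [.inl (hC i hiC m hmi), .inr (.head hmi hij)]
  · obtain ⟨hmC, hmj⟩ := not_or.mp hm
    rw [single_sub_extendByZero_of_notMem hmC, Pi.single_eq_of_ne fun h : m = j => hmj (h ▸ .refl)]

theorem Acyclic.apply_eq_one_of_conjTranspose_one_sub_mulVec (hE : Acyclic E)
    (hH : ∀ a b, H a b ≠ 0 → E b a) (hC : Ancestral E C) (hjC : j ∉ C)
    (hu : (1 - H)ᴴ *ᵥ u = Pi.single j 1 - extendByZero C x) : u j = 1 := by
  have hHjj : H j j = 0 := by_contra fun h => hE j (.single (hH j j h))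
  rw [eq_add_mul_of_conjTranspose_one_sub_mulVec hu (m := j) fun i _ hij =>
      hE.eq_zero_of_not_mem_of_not_reflTransGen hH hC hu
        (fun hiC => hjC (hC i hiC j (hH i j hij))) (fun hij' => hE j (.head' (hH i j hij) hij')),
    hHjj, star_zero, zero_mul, add_zero, single_sub_extendByZero_of_notMem hjC, Pi.single_eq_same]

theorem Acyclic.apply_eq_star_of_conjTranspose_one_sub_mulVec (hE : Acyclic E)
    (hH : ∀ a b, H a b ≠ 0 → E b a) (hC : Ancestral E C) (hjC : j ∉ C)
    (hu : (1 - H)ᴴ *ᵥ u = Pi.single j 1 - extendByZero C x) {k : Fin p} (hkj : E k j)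
    (hkC : k ∉ C) (hk : ∀ i, E k i → ¬ TransGen E i j) : u k = star (H j k) := by
  have hjk : k ≠ j := fun h => hE j (.single (h ▸ hkj))
  rw [eq_add_mul_of_conjTranspose_one_sub_mulVec hu (m := k) (j := j) fun i hij hik =>
      hE.eq_zero_of_not_mem_of_not_reflTransGen hH hC hu
        (fun hiC => hkC (hC i hiC k (hH i k hik)))
        (fun hij' => hk i (hH i k hik) ((reflTransGen_iff_eq_or_transGen.mp hij').resolve_left
          (Ne.symm hij))),
    hE.apply_eq_one_of_conjTranspose_one_sub_mulVec hH hC hjC hu, mul_one,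
    single_sub_extendByZero_of_notMem hkC, Pi.single_eq_of_ne hjk, zero_add]

end Solution

/-- Lemma 3.3 second part + Lemma 3.5: if `|H_{ik}| ≥ β > 0` on every edge
`(k,i) ∈ E`, `C ⊆ V \ {j}` is ancestral and `pa(j) ⊄ C`, then `f(j,C) ≥ σ(1 + β²) > σ`. -/
theorem condPSD_ge_of_missing_parent {p : ℕ}
    (E : Fin p → Fin p → Prop) (hacyc : Acyclic E)
    (σ : ℝ) (hσ : 0 < σ)
    (H : Matrix (Fin p) (Fin p) ℂ) (hH : ∀ a b : Fin p, H a b ≠ 0 ↔ E b a)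
    (β : ℝ) (hβ : 0 < β) (hHβ : ∀ i k : Fin p, E k i → β ≤ ‖H i k‖)
    (j : Fin p) (C : Finset (Fin p)) (hjC : j ∉ C)
    (hanc : Ancestral E C) (hpa : ¬ parents E j ⊆ ↑C) :
    σ * (1 + β ^ 2) ≤ condPSD σ H j C ∧ σ < condPSD σ H j C := by
  have hHE : ∀ a b, H a b ≠ 0 → E b a := fun a b => (hH a b).mp
  obtain ⟨x, u, hu, hval⟩ := exists_condPSD_eq_mul_sum_normSq hσ (hacyc.isUnit_one_sub hHE) j C
  obtain ⟨k, hkj, hkC, hk⟩ := hacyc.exists_parent_not_mem hanc hpa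
  have huj := hacyc.apply_eq_one_of_conjTranspose_one_sub_mulVec hHE hanc hjC hu
  have huk := hacyc.apply_eq_star_of_conjTranspose_one_sub_mulVec hHE hanc hjC hu hkj hkC hk
  have hsum : 1 + β ^ 2 ≤ ∑ i, Complex.normSq (u i) :=
    calc 1 + β ^ 2 ≤ Complex.normSq (u j) + Complex.normSq (u k) := by
          rw [huj, huk, Complex.normSq_one, Complex.star_def, Complex.normSq_conj,
            ← Complex.sq_norm]
          gcongr
          exact hHβ j k hkj
      _ ≤ ∑ i, Complex.normSq (u i) := Finset.add_le_sum (fun i _ => Complex.normSq_nonneg _)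
          (Finset.mem_univ j) (Finset.mem_univ k) fun h => hacyc j (.single (h ▸ hkj))
  have hge : σ * (1 + β ^ 2) ≤ condPSD σ H j C := hval ▸ mul_le_mul_of_nonneg_left hsum hσ.le
  exact ⟨hge, by nlinarith [mul_pos hσ (pow_pos hβ 2)]⟩
end
end

section
/- (Lemma 4.1, Bartlett-window approximation of the PSD.) Let R : ℤ → ℂ^{p×p} satisfy ‖R(k)‖ ≤ C ρ^{−|k|} for all k ∈ ℤ, where C > 0, ρ > 1 and ‖·‖ is the spectral norm. Fix ω ∈ [0,2π] and define Φ(ω) := Σ_{k∈ℤ} R(k) e^{−iωk} (the series converges absolutely) and, for N ∈ ℕ, Φ̃_N(ω) := Σ_{k=−(N−1)}^{N−1} (1 − |k|/N) R(k) e^{−iωk}. Then for every ε₁ > 0, if N > 2Cρ^{−1} / ((1 − ρ^{−1})² ε₁) then ‖Φ̃_N(ω) − Φ(ω)‖ < ε₁. -/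
open Matrix Real
open scoped Matrix.Norms.L2Operator

noncomputable section

/-!
Write the truncated, tapered sum as `∑' k, w k • f k` with the Bartlett window
`w k = max 0 (1 - |k| / N)`, which vanishes for `|k| ≥ N`. The error against `∑' k, f k` is then
`∑' k, (w k - 1) • f k`, and `|1 - w k| ≤ |k| / N` for every `k`, so the error is at most
`(C / N) ∑_{k ∈ ℤ} |k| ρ^{-|k|} = (C / N) · 2ρ⁻¹ / (1 - ρ⁻¹)²`, which is `< ε₁` by the choice of `N`.
-/

open Finset

theorem hasSum_abs_mul_pow_natAbs {x : ℝ} (hx : |x| < 1) :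
    HasSum (fun k : ℤ ↦ |(k : ℝ)| * x ^ k.natAbs) (2 * x / (1 - x) ^ 2) := by
  have hnat : HasSum (fun n : ℕ ↦ (n : ℝ) * x ^ n) (x / (1 - x) ^ 2) :=
    hasSum_coe_mul_geometric_of_norm_lt_one hx
  have h := HasSum.of_nat_of_neg (f := fun k : ℤ ↦ |(k : ℝ)| * x ^ k.natAbs) (by simpa using hnat)
    (by simpa using hnat)
  simpa [two_mul, add_div] using h

theorem summable_of_norm_le_mul_pow_natAbs {E : Type*} [NormedAddCommGroup E] [CompleteSpace E]
    {f : ℤ → E} {c x : ℝ} (hx : |x| < 1) (hf : ∀ k, ‖f k‖ ≤ c * x ^ k.natAbs) : Summable f := by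
  have hgeom : Summable fun k : ℤ ↦ x ^ k.natAbs :=
    .of_nat_of_neg (by simpa using summable_geometric_of_abs_lt_one hx)
      (by simpa using summable_geometric_of_abs_lt_one hx)
  exact (hgeom.mul_left c).of_norm_bounded hf

section

variable {E : Type*} [NormedAddCommGroup E] [NormedSpace ℂ E]

theorem norm_tsum_ofReal_smul_sub_tsum_le {ι : Type*} {w : ι → ℝ} {f : ι → E}
    (hwf : Summable fun i ↦ (w i : ℂ) • f i) (hf : Summable f) {g : ι → ℝ} {b : ℝ}
    (hg : HasSum g b) (hfg : ∀ i, |1 - w i| * ‖f i‖ ≤ g i) :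
    ‖∑' i, (w i : ℂ) • f i - ∑' i, f i‖ ≤ b := by
  rw [← hwf.tsum_sub hf]
  refine tsum_of_norm_bounded hg fun i ↦ ?_
  have hsmul : (w i : ℂ) • f i - f i = ((w i - 1 : ℝ) : ℂ) • f i := by
    rw [Complex.ofReal_sub, Complex.ofReal_one, sub_smul, one_smul]
  rw [hsmul, norm_smul, Complex.norm_real, Real.norm_eq_abs, abs_sub_comm]
  exact hfg i

def bartlettWindow (N : ℕ) (k : ℤ) : ℝ := max 0 (1 - |(k : ℝ)| / N)

theorem abs_one_sub_bartlettWindow_le (N : ℕ) (k : ℤ) :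
    |1 - bartlettWindow N k| ≤ |(k : ℝ)| / N := by
  unfold bartlettWindow
  rcases le_total (1 - |(k : ℝ)| / N) 0 with h | h
  · rw [max_eq_left h, sub_zero, abs_one]
    linarith
  · rw [max_eq_right h, sub_sub_cancel, abs_of_nonneg (by positivity)]

theorem hasSum_bartlettWindow_smul {N : ℕ} (hN : 0 < N) (f : ℤ → E) :
    HasSum (fun k ↦ (bartlettWindow N k : ℂ) • f k)
      (∑ k ∈ Icc (-(N : ℤ) + 1) ((N : ℤ) - 1), ((1 - |(k : ℝ)| / N : ℝ) : ℂ) • f k) := by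
  have hN' : (0 : ℝ) < N := Nat.cast_pos.2 hN
  have hmem : ∀ k : ℤ, k ∈ Icc (-(N : ℤ) + 1) ((N : ℤ) - 1) ↔ |(k : ℝ)| < N := by
    intro k
    rw [mem_Icc, ← Int.cast_abs, show (N : ℝ) = ((N : ℤ) : ℝ) by norm_cast, Int.cast_lt, abs_lt]
    omega
  have hout : ∀ k ∉ Icc (-(N : ℤ) + 1) ((N : ℤ) - 1), (bartlettWindow N k : ℂ) • f k = 0 := by
    intro k hk
    have hNk : (N : ℝ) ≤ |(k : ℝ)| := not_lt.1 ((hmem k).not.1 hk)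
    rw [bartlettWindow, max_eq_left (sub_nonpos.2 ((one_le_div hN').2 hNk)), Complex.ofReal_zero,
      zero_smul]
  have hin : ∑ k ∈ Icc (-(N : ℤ) + 1) ((N : ℤ) - 1), (bartlettWindow N k : ℂ) • f k =
      ∑ k ∈ Icc (-(N : ℤ) + 1) ((N : ℤ) - 1), ((1 - |(k : ℝ)| / N : ℝ) : ℂ) • f k := by
    refine sum_congr rfl fun k hk ↦ ?_
    rw [bartlettWindow, max_eq_right (sub_nonneg.2 ((div_le_one hN').2 ((hmem k).1 hk).le))]
  exact hin ▸ hasSum_sum_of_ne_finset_zero hout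

theorem norm_sum_bartlett_smul_sub_tsum_le [CompleteSpace E] {f : ℤ → E} {c x : ℝ}
    (hx : |x| < 1) (hf : ∀ k, ‖f k‖ ≤ c * x ^ k.natAbs) {N : ℕ} (hN : 0 < N) :
    ‖∑ k ∈ Icc (-(N : ℤ) + 1) ((N : ℤ) - 1), ((1 - |(k : ℝ)| / N : ℝ) : ℂ) • f k - ∑' k, f k‖ ≤
      c / N * (2 * x / (1 - x) ^ 2) := by
  have hW := hasSum_bartlettWindow_smul hN f
  rw [← hW.tsum_eq]
  refine norm_tsum_ofReal_smul_sub_tsum_le hW.summable (summable_of_norm_le_mul_pow_natAbs hx hf)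
    ((hasSum_abs_mul_pow_natAbs hx).mul_left (c / N)) fun k ↦ ?_
  calc |1 - bartlettWindow N k| * ‖f k‖ ≤ |(k : ℝ)| / N * (c * x ^ k.natAbs) :=
        mul_le_mul (abs_one_sub_bartlettWindow_le N k) (hf k) (norm_nonneg _) (by positivity)
    _ = c / N * (|(k : ℝ)| * x ^ k.natAbs) := by ring

end

theorem norm_cexp_neg_I_mul_ofReal_mul_intCast (ω : ℝ) (k : ℤ) :
    ‖Complex.exp (-Complex.I * ω * k)‖ = 1 := by
  rw [show -Complex.I * ω * k = ((-(ω * k) : ℝ) : ℂ) * Complex.I by push_cast; ring]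
  exact Complex.norm_exp_ofReal_mul_I _

theorem bartlett_window_approx_general {p : ℕ}
    (R : ℤ → Matrix (Fin p) (Fin p) ℂ) (c ρ : ℝ) (hc : 0 < c) (hρ : 1 < ρ)
    (hR : ∀ k : ℤ, ‖R k‖ ≤ c * ρ ^ (-|k|))
    (ω : ℝ) (ε₁ : ℝ) (hε₁ : 0 < ε₁) (N : ℕ)
    (hN : (N : ℝ) > 2 * c * ρ⁻¹ / ((1 - ρ⁻¹) ^ 2 * ε₁)) :
    ‖(∑ k ∈ Finset.Icc (-(N : ℤ) + 1) ((N : ℤ) - 1),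
        ((1 - (|k| : ℝ) / N : ℝ) : ℂ) •
          Complex.exp (-Complex.I * ω * k) • R k) -
      ∑' k : ℤ, Complex.exp (-Complex.I * ω * k) • R k‖ < ε₁ := by
  have hρ0 : 0 < ρ := one_pos.trans hρ
  have hρinv : ρ⁻¹ < 1 := inv_lt_one_of_one_lt₀ hρ
  have hx : |ρ⁻¹| < 1 := by rwa [abs_of_pos (inv_pos.2 hρ0)]
  have hf (k : ℤ) : ‖Complex.exp (-Complex.I * ω * k) • R k‖ ≤ c * ρ⁻¹ ^ k.natAbs := by
    rw [norm_smul, norm_cexp_neg_I_mul_ofReal_mul_intCast, one_mul, ← zpow_natCast,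
      ← Int.abs_eq_natAbs, _root_.inv_zpow']
    exact hR k
  have hdenom : 0 < (1 - ρ⁻¹) ^ 2 * ε₁ := mul_pos (pow_pos (sub_pos.2 hρinv) 2) hε₁
  have hNpos : (0 : ℝ) < N := lt_of_le_of_lt (by positivity) hN
  rw [gt_iff_lt, div_lt_iff₀ hdenom] at hN
  calc _ ≤ c / N * (2 * ρ⁻¹ / (1 - ρ⁻¹) ^ 2) :=
        norm_sum_bartlett_smul_sub_tsum_le hx hf (by exact_mod_cast hNpos)
    _ < ε₁ := by
      rw [div_mul_div_comm, div_lt_iff₀ (by positivity)]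
      linarith

/-- Lemma 4.1, Bartlett-window approximation of the PSD: if
`‖R(k)‖ ≤ C ρ^{-|k|}` with `C > 0`, `ρ > 1`, then for `ω ∈ [0,2π]`,
`Φ(ω) := Σ_{k ∈ ℤ} R(k) e^{-iωk}` and
`Φ̃_N(ω) := Σ_{|k| ≤ N-1} (1 - |k|/N) R(k) e^{-iωk}` satisfy
`‖Φ̃_N(ω) - Φ(ω)‖ < ε₁` whenever `N > 2Cρ⁻¹ / ((1 - ρ⁻¹)² ε₁)`. -/
theorem bartlett_window_approx {p : ℕ}
    (R : ℤ → Matrix (Fin p) (Fin p) ℂ) (c ρ : ℝ) (hc : 0 < c) (hρ : 1 < ρ)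
    (hR : ∀ k : ℤ, ‖R k‖ ≤ c * ρ ^ (-|k|))
    (ω : ℝ) (hω : ω ∈ Set.Icc (0 : ℝ) (2 * π))
    (ε₁ : ℝ) (hε₁ : 0 < ε₁) (N : ℕ)
    (hN : (N : ℝ) > 2 * c * ρ⁻¹ / ((1 - ρ⁻¹) ^ 2 * ε₁)) :
    ‖(∑ k ∈ Finset.Icc (-(N : ℤ) + 1) ((N : ℤ) - 1),
        ((1 - (|k| : ℝ) / N : ℝ) : ℂ) •
          Complex.exp (-Complex.I * ω * k) • R k) -
      ∑' k : ℤ, Complex.exp (-Complex.I * ω * k) • R k‖ < ε₁ :=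
  bartlett_window_approx_general R c ρ hc hρ hR ω ε₁ hε₁ N hN
end
end
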